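/- For ρ > 1 define K(ρ) := ∫₀¹ dt/√(t(1−t)(ρ−t)) and K'(ρ) := ∫₁^ρ dt/√(t(t−1)(ρ−t)), and set L(ρ) := π·K'(ρ)/K(ρ). Then L(ρ) = log ρ + O(1) as ρ → ∞: there exist constants C > 0 and ρ₀ > 1 such that |L(ρ) − log ρ| ≤ C for all ρ ≥ ρ₀. Equivalently, √ρ·K(ρ) → π and √ρ·K'(ρ) − log ρ remains bounded as ρ → ∞. -/

import Mathlib

/-!
Both integrals are squeezed between integrals with elementary antiderivatives.
On `[0, 1]` the factor `1/√(ρ - t)` lies between `1/√ρ` and `1/√(ρ - 1)`, and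
`∫₀¹ dt/√(t(1-t)) = π`, so `π/√ρ ≤ K(ρ) ≤ π/√(ρ - 1)`.
On `[1, ρ]`, `t(t-1)(ρ-t) ≤ (ρ-1)t²` gives `√(ρ-1)·K'(ρ) ≥ ∫₁^ρ dt/t = log ρ`, while
`√ρ ≤ √t + √(ρ-t)` splits the integrand into `(1/√(t(t-1)) + 1/√((t-1)(ρ-t)))/√ρ`, whose two
parts integrate to `arcosh(2ρ-1) ≤ log 4ρ` and `π`. Hence `√ρ·K'(ρ) = log ρ + O(1)`, and the
bounds on `K` place `π·K'/K` between `√(ρ-1)·K'` and `√ρ·K'`.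
-/

open Set Filter

noncomputable def ellipticK (ρ : ℝ) : ℝ :=
  ∫ t in (0:ℝ)..1, 1 / Real.sqrt (t * (1 - t) * (ρ - t))

noncomputable def ellipticK' (ρ : ℝ) : ℝ :=
  ∫ t in (1:ℝ)..ρ, 1 / Real.sqrt (t * (t - 1) * (ρ - t))

open MeasureTheory intervalIntegral Real

section FTC

variable {g g' : ℝ → ℝ} {a b : ℝ}

theorem intervalIntegrable_deriv_of_nonneg_of_le (hab : a ≤ b) (hcont : ContinuousOn g (Icc a b))
    (hderiv : ∀ x ∈ Ioo a b, HasDerivAt g (g' x) x) (hpos : ∀ x ∈ Ioo a b, 0 ≤ g' x) :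
    IntervalIntegrable g' volume a b :=
  (intervalIntegrable_iff_integrableOn_Ioc_of_le hab).2
    (integrableOn_deriv_of_nonneg hcont hderiv hpos)

theorem integral_eq_sub_of_hasDerivAt_of_nonneg (hab : a ≤ b) (hcont : ContinuousOn g (Icc a b))
    (hderiv : ∀ x ∈ Ioo a b, HasDerivAt g (g' x) x) (hpos : ∀ x ∈ Ioo a b, 0 ≤ g' x) :
    ∫ x in a..b, g' x = g b - g a :=
  integral_eq_sub_of_hasDeriv_right_of_le hab hcont (fun x hx => (hderiv x hx).hasDerivWithinAt)
    (intervalIntegrable_deriv_of_nonneg_of_le hab hcont hderiv hpos)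

end FTC

theorem IntervalIntegrable.mono_fun_of_nonneg_Ioo {f g : ℝ → ℝ} {a b : ℝ} (hab : a ≤ b)
    (hg : IntervalIntegrable g volume a b) (hf : Measurable f)
    (hf₀ : ∀ x ∈ Ioo a b, 0 ≤ f x) (hfg : ∀ x ∈ Ioo a b, f x ≤ g x) :
    IntervalIntegrable f volume a b := by
  refine hg.mono_fun' hf.aestronglyMeasurable ?_
  rw [uIoc_of_le hab, ← Measure.restrict_congr_set Ioo_ae_eq_Ioc]
  filter_upwards [ae_restrict_mem measurableSet_Ioo] with x hx
  rw [Real.norm_of_nonneg (hf₀ x hx)]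
  exact hfg x hx

theorem one_div_sqrt_le_one_div_sqrt {x y : ℝ} (hx : 0 < x) (h : x ≤ y) : 1 / √y ≤ 1 / √x :=
  one_div_le_one_div_of_le (sqrt_pos.2 hx) (sqrt_le_sqrt h)

theorem sqrt_add_le_sqrt_add_sqrt (x y : ℝ) : √(x + y) ≤ √x + √y :=
  sqrt_le_iff.2 ⟨by positivity, by
    nlinarith [sq_sqrt' (x := x), sq_sqrt' (x := y), le_max_left x 0, le_max_left y 0,
      mul_nonneg (sqrt_nonneg x) (sqrt_nonneg y)]⟩

section Antiderivatives

variable {a b ρ : ℝ}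

theorem hasDerivAt_arcsin_affine {x : ℝ} (hx : x ∈ Ioo a b) :
    HasDerivAt (fun t => arcsin ((2 * t - a - b) / (b - a))) (1 / √((x - a) * (b - x))) x := by
  obtain ⟨hax, hxb⟩ := hx
  have hba : 0 < b - a := by linarith
  have hlow : (2 * x - a - b) / (b - a) ≠ -1 := by
    rw [ne_eq, div_eq_iff hba.ne']; intro h; linarith
  have hup : (2 * x - a - b) / (b - a) ≠ 1 := by
    rw [ne_eq, div_eq_iff hba.ne']; intro h; linarith
  refine ((hasDerivAt_arcsin hlow hup).comp x
    ((((hasDerivAt_id x).const_mul 2).sub_const a).sub_const b |>.div_const (b - a))).congr_deriv ?_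
  have hsq : 1 - ((2 * x - a - b) / (b - a)) ^ 2 = (2 / (b - a)) ^ 2 * ((x - a) * (b - x)) := by
    field_simp; ring
  rw [hsq, sqrt_mul (sq_nonneg _), sqrt_sq (by positivity)]
  have : 0 < √((x - a) * (b - x)) := sqrt_pos.2 (mul_pos (by linarith) (by linarith))
  field_simp

theorem intervalIntegrable_one_div_sqrt_sub_mul_sub (hab : a ≤ b) :
    IntervalIntegrable (fun t => 1 / √((t - a) * (b - t))) volume a b :=
  intervalIntegrable_deriv_of_nonneg_of_le hab (by fun_prop)
    (fun _ hx => hasDerivAt_arcsin_affine hx) fun _ _ => by positivity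

theorem integral_one_div_sqrt_sub_mul_sub (hab : a < b) :
    ∫ t in a..b, 1 / √((t - a) * (b - t)) = π := by
  rw [integral_eq_sub_of_hasDerivAt_of_nonneg hab.le (by fun_prop)
    (fun _ hx => hasDerivAt_arcsin_affine hx) fun _ _ => by positivity]
  have hba : b - a ≠ 0 := by linarith
  rw [show (2 * b - a - b) / (b - a) = 1 by field_simp; ring,
    show (2 * a - a - b) / (b - a) = -1 by field_simp; ring, arcsin_one, arcsin_neg_one]
  ring

theorem intervalIntegrable_one_div_sqrt_mul_one_sub :
    IntervalIntegrable (fun t : ℝ => 1 / √(t * (1 - t))) volume 0 1 := by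
  simpa using intervalIntegrable_one_div_sqrt_sub_mul_sub zero_le_one

theorem integral_one_div_sqrt_mul_one_sub : ∫ t in (0:ℝ)..1, 1 / √(t * (1 - t)) = π := by
  simpa using integral_one_div_sqrt_sub_mul_sub zero_lt_one

theorem hasDerivAt_arcosh_two_mul_sub_one {x : ℝ} (hx : 1 < x) :
    HasDerivAt (fun t => arcosh (2 * t - 1)) (1 / √(x * (x - 1))) x := by
  refine ((hasDerivAt_arcosh (show 2 * x - 1 ∈ Ioi 1 by simp only [mem_Ioi]; linarith)).comp x
    (((hasDerivAt_id x).const_mul 2).sub_const 1)).congr_deriv ?_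
  rw [show (2 * x - 1) ^ 2 - 1 = 2 ^ 2 * (x * (x - 1)) by ring, sqrt_mul (sq_nonneg _),
    sqrt_sq zero_le_two]
  have : 0 < √(x * (x - 1)) := sqrt_pos.2 (mul_pos (by linarith) (by linarith))
  field_simp

theorem continuousOn_arcosh_two_mul_sub_one :
    ContinuousOn (fun t => arcosh (2 * t - 1)) (Ici 1) :=
  continuousOn_arcosh.comp (by fun_prop) fun t ht => by
    simp only [mem_Ici] at ht ⊢; linarith

theorem intervalIntegrable_one_div_sqrt_mul_sub_one (hρ : 1 ≤ ρ) :
    IntervalIntegrable (fun t => 1 / √(t * (t - 1))) volume 1 ρ :=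
  intervalIntegrable_deriv_of_nonneg_of_le hρ
    (continuousOn_arcosh_two_mul_sub_one.mono Icc_subset_Ici_self)
    (fun _ hx => hasDerivAt_arcosh_two_mul_sub_one hx.1) fun _ _ => by positivity

theorem integral_one_div_sqrt_mul_sub_one (hρ : 1 ≤ ρ) :
    ∫ t in (1:ℝ)..ρ, 1 / √(t * (t - 1)) = arcosh (2 * ρ - 1) := by
  rw [integral_eq_sub_of_hasDerivAt_of_nonneg hρ
    (continuousOn_arcosh_two_mul_sub_one.mono Icc_subset_Ici_self)
    (fun _ hx => hasDerivAt_arcosh_two_mul_sub_one hx.1) fun _ _ => by positivity]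
  norm_num [arcosh_zero]

theorem arcosh_le_log_two_mul {x : ℝ} (hx : 1 ≤ x) : arcosh x ≤ log (2 * x) := by
  refine log_le_log (by positivity) ?_
  have : √(x ^ 2 - 1) ≤ x := sqrt_le_iff.2 ⟨by linarith, by linarith⟩
  linarith

end Antiderivatives

section EllipticK

variable {ρ : ℝ}

theorem ellipticK_integrand_eq {t : ℝ} (ht : t ∈ Icc (0:ℝ) 1) :
    1 / √(t * (1 - t) * (ρ - t)) = 1 / √(ρ - t) * (1 / √(t * (1 - t))) := by
  rw [sqrt_mul (mul_nonneg ht.1 (sub_nonneg.2 ht.2)), one_div_mul_one_div, mul_comm]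

theorem intervalIntegrable_ellipticK_integrand (hρ : 1 < ρ) :
    IntervalIntegrable (fun t => 1 / √(t * (1 - t) * (ρ - t))) volume 0 1 := by
  refine (intervalIntegrable_one_div_sqrt_mul_one_sub.const_mul
    (1 / √(ρ - 1))).mono_fun_of_nonneg_Ioo zero_le_one (by fun_prop) (fun _ _ => by positivity)
    fun t ht => ?_
  rw [ellipticK_integrand_eq (Ioo_subset_Icc_self ht)]
  gcongr ?_ * _
  exact one_div_sqrt_le_one_div_sqrt (sub_pos.2 hρ) (by linarith [ht.2])

theorem pi_div_sqrt_le_ellipticK (hρ : 1 < ρ) : π / √ρ ≤ ellipticK ρ := by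
  calc π / √ρ = ∫ t in (0:ℝ)..1, 1 / √ρ * (1 / √(t * (1 - t))) := by
        rw [intervalIntegral.integral_const_mul, integral_one_div_sqrt_mul_one_sub,
          one_div_mul_eq_div]
    _ ≤ ellipticK ρ := by
        refine integral_mono_on_of_le_Ioo zero_le_one
          (intervalIntegrable_one_div_sqrt_mul_one_sub.const_mul _)
          (intervalIntegrable_ellipticK_integrand hρ) fun t ht => ?_
        rw [ellipticK_integrand_eq (Ioo_subset_Icc_self ht)]
        gcongr ?_ * _
        exact one_div_sqrt_le_one_div_sqrt (by linarith [ht.2]) (by linarith [ht.1])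

theorem ellipticK_le_pi_div_sqrt_sub_one (hρ : 1 < ρ) : ellipticK ρ ≤ π / √(ρ - 1) := by
  calc ellipticK ρ ≤ ∫ t in (0:ℝ)..1, 1 / √(ρ - 1) * (1 / √(t * (1 - t))) := by
        refine integral_mono_on_of_le_Ioo zero_le_one (intervalIntegrable_ellipticK_integrand hρ)
          (intervalIntegrable_one_div_sqrt_mul_one_sub.const_mul _) fun t ht => ?_
        rw [ellipticK_integrand_eq (Ioo_subset_Icc_self ht)]
        gcongr ?_ * _
        exact one_div_sqrt_le_one_div_sqrt (sub_pos.2 hρ) (by linarith [ht.2])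
    _ = π / √(ρ - 1) := by
        rw [intervalIntegral.integral_const_mul, integral_one_div_sqrt_mul_one_sub,
          one_div_mul_eq_div]

theorem ellipticK_pos (hρ : 1 < ρ) : 0 < ellipticK ρ :=
  lt_of_lt_of_le (by positivity) (pi_div_sqrt_le_ellipticK hρ)

theorem tendsto_sqrt_mul_ellipticK : Tendsto (fun ρ => √ρ * ellipticK ρ) atTop (nhds π) := by
  have hupper : Tendsto (fun ρ : ℝ => π / √(1 - ρ⁻¹)) atTop (nhds π) := by
    have h : Tendsto (fun ρ : ℝ => 1 - ρ⁻¹) atTop (nhds 1) := by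
      simpa using tendsto_inv_atTop_zero.const_sub (1 : ℝ)
    have := Filter.Tendsto.div (tendsto_const_nhds (x := π)) h.sqrt (by simp)
    rwa [sqrt_one, div_one] at this
  refine tendsto_of_tendsto_of_tendsto_of_le_of_le' tendsto_const_nhds hupper ?_ ?_ <;>
    filter_upwards [eventually_gt_atTop 1] with ρ hρ
  · have := pi_div_sqrt_le_ellipticK hρ
    rwa [div_le_iff₀' (sqrt_pos.2 (by linarith))] at this
  · have hs : 0 < √(ρ - 1) := sqrt_pos.2 (by linarith)
    calc √ρ * ellipticK ρ ≤ √ρ * (π / √(ρ - 1)) := by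
          gcongr
          exact ellipticK_le_pi_div_sqrt_sub_one hρ
      _ = π / √(1 - ρ⁻¹) := by
          rw [show 1 - ρ⁻¹ = (ρ - 1) / ρ by field_simp, sqrt_div' _ (by linarith)]
          field_simp

end EllipticK

section EllipticK'

variable {ρ t : ℝ}

theorem one_div_sqrt_sub_one_mul_one_div_le_ellipticK'_integrand (ht : t ∈ Ioo 1 ρ) :
    1 / √(ρ - 1) * (1 / t) ≤ 1 / √(t * (t - 1) * (ρ - t)) := by
  obtain ⟨h1t, htρ⟩ := ht
  have hsq : √(ρ - 1) * t = √((ρ - 1) * t ^ 2) := by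
    rw [sqrt_mul (by linarith), sqrt_sq (by linarith)]
  rw [one_div_mul_one_div, hsq]
  refine one_div_sqrt_le_one_div_sqrt (by positivity) ?_
  nlinarith [mul_pos (sub_pos.2 h1t) (sub_pos.2 htρ)]

theorem ellipticK'_integrand_le (ht : t ∈ Ioo 1 ρ) :
    1 / √(t * (t - 1) * (ρ - t)) ≤ 1 / √ρ * (1 / √(t * (t - 1)) + 1 / √((t - 1) * (ρ - t))) := by
  obtain ⟨h1t, htρ⟩ := ht
  have hx : 0 < √t := sqrt_pos.2 (by linarith)
  have hy : 0 < √(t - 1) := sqrt_pos.2 (by linarith)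
  have hz : 0 < √(ρ - t) := sqrt_pos.2 (by linarith)
  have hs : 0 < √ρ := sqrt_pos.2 (by linarith)
  have hρ : √ρ ≤ √t + √(ρ - t) := by simpa using sqrt_add_le_sqrt_add_sqrt t (ρ - t)
  have ht : 0 ≤ t := by linarith
  have ht1 : 0 ≤ t - 1 := by linarith
  rw [sqrt_mul (mul_nonneg ht ht1), sqrt_mul ht, sqrt_mul ht1,
    div_add_div _ _ (by positivity) (by positivity), one_div_mul_eq_div, div_div,
    div_le_div_iff₀ (by positivity) (by positivity)]
  nlinarith [mul_le_mul_of_nonneg_left hρ (mul_pos (mul_pos (mul_pos hx hy) hy) hz).le]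

theorem intervalIntegrable_ellipticK'_integrand (hρ : 1 < ρ) :
    IntervalIntegrable (fun t => 1 / √(t * (t - 1) * (ρ - t))) volume 1 ρ :=
  (((intervalIntegrable_one_div_sqrt_mul_sub_one hρ.le).add
    (intervalIntegrable_one_div_sqrt_sub_mul_sub hρ.le)).const_mul (1 / √ρ)).mono_fun_of_nonneg_Ioo
    hρ.le (by fun_prop) (fun _ _ => by positivity) fun _ ht => ellipticK'_integrand_le ht

theorem ellipticK'_nonneg (hρ : 1 ≤ ρ) : 0 ≤ ellipticK' ρ :=
  intervalIntegral.integral_nonneg hρ fun _ _ => by positivity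

theorem log_le_sqrt_sub_one_mul_ellipticK' (hρ : 1 < ρ) : log ρ ≤ √(ρ - 1) * ellipticK' ρ := by
  rw [← div_le_iff₀' (sqrt_pos.2 (sub_pos.2 hρ))]
  calc log ρ / √(ρ - 1) = ∫ t in (1:ℝ)..ρ, 1 / √(ρ - 1) * (1 / t) := by
        rw [intervalIntegral.integral_const_mul, integral_one_div_of_pos one_pos (by linarith),
          div_one, one_div_mul_eq_div]
    _ ≤ ellipticK' ρ := by
        refine integral_mono_on_of_le_Ioo hρ.le ?_ (intervalIntegrable_ellipticK'_integrand hρ)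
          fun t ht => one_div_sqrt_sub_one_mul_one_div_le_ellipticK'_integrand ht
        refine (ContinuousOn.intervalIntegrable ?_).const_mul _
        exact continuousOn_const.div continuousOn_id fun t ht => by
          rw [uIcc_of_le hρ.le] at ht; exact ne_of_gt (by linarith [ht.1])

theorem sqrt_mul_ellipticK'_le (hρ : 1 < ρ) : √ρ * ellipticK' ρ ≤ log (4 * ρ) + π := by
  rw [← le_div_iff₀' (sqrt_pos.2 (by linarith))]
  have hA := intervalIntegrable_one_div_sqrt_mul_sub_one hρ.le
  have hB := intervalIntegrable_one_div_sqrt_sub_mul_sub hρ.le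
  calc ellipticK' ρ
      ≤ ∫ t in (1:ℝ)..ρ, 1 / √ρ * (1 / √(t * (t - 1)) + 1 / √((t - 1) * (ρ - t))) :=
        integral_mono_on_of_le_Ioo hρ.le (intervalIntegrable_ellipticK'_integrand hρ)
          ((hA.add hB).const_mul _) fun t ht => ellipticK'_integrand_le ht
    _ = (arcosh (2 * ρ - 1) + π) / √ρ := by
        rw [intervalIntegral.integral_const_mul, integral_add hA hB,
          integral_one_div_sqrt_mul_sub_one hρ.le, integral_one_div_sqrt_sub_mul_sub hρ,
          one_div_mul_eq_div]
    _ ≤ (log (4 * ρ) + π) / √ρ := by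
        gcongr
        calc arcosh (2 * ρ - 1) ≤ log (2 * (2 * ρ - 1)) := arcosh_le_log_two_mul (by linarith)
          _ ≤ log (4 * ρ) := log_le_log (by linarith) (by linarith)

theorem log_le_sqrt_mul_ellipticK' (hρ : 1 < ρ) : log ρ ≤ √ρ * ellipticK' ρ :=
  (log_le_sqrt_sub_one_mul_ellipticK' hρ).trans
    (mul_le_mul_of_nonneg_right (sqrt_le_sqrt (by linarith)) (ellipticK'_nonneg hρ.le))

theorem abs_sqrt_mul_ellipticK'_sub_log_le (hρ : 1 < ρ) :
    |√ρ * ellipticK' ρ - log ρ| ≤ log 4 + π := by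
  have hupper := sqrt_mul_ellipticK'_le hρ
  rw [log_mul (by norm_num) (by linarith)] at hupper
  rw [abs_le]
  constructor <;> linarith [log_le_sqrt_mul_ellipticK' hρ, log_nonneg (by norm_num : (1:ℝ) ≤ 4),
    pi_pos]

end EllipticK'

section RectangleLength

variable {ρ : ℝ}

theorem log_le_pi_mul_ellipticK'_div_ellipticK (hρ : 1 < ρ) :
    log ρ ≤ π * ellipticK' ρ / ellipticK ρ := by
  have hs : 0 < √(ρ - 1) := sqrt_pos.2 (sub_pos.2 hρ)
  rw [le_div_iff₀ (ellipticK_pos hρ)]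
  calc log ρ * ellipticK ρ ≤ log ρ * (π / √(ρ - 1)) :=
        mul_le_mul_of_nonneg_left (ellipticK_le_pi_div_sqrt_sub_one hρ) (log_nonneg hρ.le)
    _ ≤ √(ρ - 1) * ellipticK' ρ * (π / √(ρ - 1)) :=
        mul_le_mul_of_nonneg_right (log_le_sqrt_sub_one_mul_ellipticK' hρ) (by positivity)
    _ = π * ellipticK' ρ := by field_simp

theorem pi_mul_ellipticK'_div_ellipticK_le (hρ : 1 < ρ) :
    π * ellipticK' ρ / ellipticK ρ ≤ √ρ * ellipticK' ρ := by
  have hs : 0 < √ρ := sqrt_pos.2 (by linarith)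
  rw [div_le_iff₀ (ellipticK_pos hρ)]
  calc π * ellipticK' ρ = √ρ * ellipticK' ρ * (π / √ρ) := by field_simp
    _ ≤ √ρ * ellipticK' ρ * ellipticK ρ :=
        mul_le_mul_of_nonneg_left (pi_div_sqrt_le_ellipticK hρ)
          (mul_nonneg hs.le (ellipticK'_nonneg hρ.le))

theorem abs_pi_mul_ellipticK'_div_ellipticK_sub_log_le (hρ : 1 < ρ) :
    |π * ellipticK' ρ / ellipticK ρ - log ρ| ≤ log 4 + π := by
  have hupper := (pi_mul_ellipticK'_div_ellipticK_le hρ).trans (sqrt_mul_ellipticK'_le hρ)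
  rw [log_mul (by norm_num) (by linarith)] at hupper
  rw [abs_le]
  constructor <;> linarith [log_le_pi_mul_ellipticK'_div_ellipticK hρ,
    log_nonneg (by norm_num : (1:ℝ) ≤ 4), pi_pos]

end RectangleLength

/-- The length `L(ρ) = π·K'(ρ)/K(ρ)` of the conformal rectangle satisfies
`L(ρ) = log ρ + O(1)` as `ρ → ∞`; equivalently `√ρ·K(ρ) → π` and
`√ρ·K'(ρ) − log ρ` stays bounded. -/
theorem rectangle_length_asymptotics :
    (∃ C > (0:ℝ), ∃ ρ₀ > (1:ℝ), ∀ ρ ≥ ρ₀,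
      |Real.pi * ellipticK' ρ / ellipticK ρ - Real.log ρ| ≤ C) ∧
    Tendsto (fun ρ => Real.sqrt ρ * ellipticK ρ) atTop (nhds Real.pi) ∧
    (∃ C > (0:ℝ), ∃ ρ₀ > (1:ℝ), ∀ ρ ≥ ρ₀,
      |Real.sqrt ρ * ellipticK' ρ - Real.log ρ| ≤ C) := by
  have hC : 0 < log 4 + π := by positivity
  refine ⟨⟨log 4 + π, hC, 2, by norm_num, fun ρ hρ => ?_⟩, tendsto_sqrt_mul_ellipticK,
    ⟨log 4 + π, hC, 2, by norm_num, fun ρ hρ => ?_⟩⟩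
  exacts [abs_pi_mul_ellipticK'_div_ellipticK_sub_log_le (by linarith),
    abs_sqrt_mul_ellipticK'_sub_log_le (by linarith)]
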